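/- arXiv:2401.13128 — 4 statements merged into one kernel-verified Lean document; each statement's English description precedes it below -/
import Mathlib

section
/- Let A_1, ..., A_N ∈ ℝ^{n×n} and let P_1 ∈ ℝ^{n×n} be symmetric positive definite with P_1 A_j + A_jᵀ P_1 ≼ 0 for all j = 1, ..., N. Then for every integer i ≥ 1, the block-diagonal matrix 𝒫_i = diag(P_1, ⊗²P_1, ..., ⊗ⁱP_1) is symmetric positive definite and satisfies 𝒫_i Ãⁱ(A_j) + Ãⁱ(A_j)ᵀ 𝒫_i ≼ 0 for all j = 1, ..., N. -/
open Matrix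

noncomputable section

/-- `M ≼ 0` for a (symmetric) matrix: `ξᵀ M ξ ≤ 0` for all `ξ`. -/
def NegSemidef {m : Type*} [Fintype m] (M : Matrix m m ℝ) : Prop :=
  ∀ x : m → ℝ, x ⬝ᵥ M *ᵥ x ≤ 0

/-- Index type for Kronecker powers: `kronIdx n k` indexes the `(k+1)`-st Kronecker power
of an `n`-dimensional object. -/
def kronIdx (n : ℕ) : ℕ → Type
  | 0 => Fin n
  | k+1 => Fin n × kronIdx n k

instance kronIdxFintype (n : ℕ) : ∀ k, Fintype (kronIdx n k)
  | 0 => inferInstanceAs (Fintype (Fin n))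
  | k+1 => @instFintypeProd _ _ _ (kronIdxFintype n k)

instance kronIdxDecEq (n : ℕ) : ∀ k, DecidableEq (kronIdx n k)
  | 0 => inferInstanceAs (DecidableEq (Fin n))
  | k+1 => @instDecidableEqProd _ _ _ (kronIdxDecEq n k)

/-- `matKronPow M k = ⊗^{k+1} M`, the `(k+1)`-st Kronecker power of the matrix `M`
(so `matKronPow M 0 = ⊗¹M = M`). -/
def matKronPow {n : ℕ} (M : Matrix (Fin n) (Fin n) ℝ) : ∀ k, Matrix (kronIdx n k) (kronIdx n k) ℝ
  | 0 => M
  | k+1 => Matrix.kroneckerMap (· * ·) M (matKronPow M k)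

/-- Kronecker product of two vectors. -/
def vecKron {α β : Type*} (u : α → ℝ) (v : β → ℝ) : α × β → ℝ := fun p => u p.1 * v p.2

/-- `vecKronPow x k = ⊗^{k+1} x`, the `(k+1)`-st Kronecker power of the vector `x`. -/
def vecKronPow {n : ℕ} (x : Fin n → ℝ) : ∀ k, kronIdx n k → ℝ
  | 0 => x
  | k+1 => vecKron x (vecKronPow x k)

/-- The lifted matrices: `liftA A k = 𝒜^{k+1}(A)`, with `𝒜¹(A) = A` and
`𝒜^{k+1}(A) = Iₙ ⊗ 𝒜^k(A) + A ⊗ I_{n^k}`. -/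
def liftA {n : ℕ} (A : Matrix (Fin n) (Fin n) ℝ) : ∀ k, Matrix (kronIdx n k) (kronIdx n k) ℝ
  | 0 => A
  | k+1 => Matrix.kroneckerMap (· * ·) (1 : Matrix (Fin n) (Fin n) ℝ) (liftA A k)
      + Matrix.kroneckerMap (· * ·) A (1 : Matrix (kronIdx n k) (kronIdx n k) ℝ)

/-- Index type of the stacked hierarchy system of degree `i`: blocks `k = 0, …, i-1`
corresponding to Kronecker powers `1, …, i`; its cardinality is `ñ_i = n + n² + ⋯ + nⁱ`. -/
abbrev tildeIdx (n i : ℕ) : Type := Σ k : Fin i, kronIdx n k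

/-- `Ãⁱ(A) = diag(𝒜¹(A), 𝒜²(A), …, 𝒜ⁱ(A))`. -/
def tildeA {n : ℕ} (A : Matrix (Fin n) (Fin n) ℝ) (i : ℕ) :
    Matrix (tildeIdx n i) (tildeIdx n i) ℝ :=
  Matrix.blockDiagonal' (fun k : Fin i => liftA A k)

/-- `diag(P, ⊗²P, …, ⊗ⁱP)`. -/
def tildeKronPow {n : ℕ} (P : Matrix (Fin n) (Fin n) ℝ) (i : ℕ) :
    Matrix (tildeIdx n i) (tildeIdx n i) ℝ :=
  Matrix.blockDiagonal' (fun k : Fin i => matKronPow P k)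

/-- `ξ̃_i(x) = (x, ⊗²x, …, ⊗ⁱx)`, the stacked vector of Kronecker powers of `x`. -/
def tildeXi {n : ℕ} (i : ℕ) (x : Fin n → ℝ) : tildeIdx n i → ℝ :=
  fun p => vecKronPow x p.1 p.2

/-! The lifted matrix `𝒜^{k+1}(A) = Iₙ ⊗ 𝒜^k(A) + A ⊗ I` is a Kronecker sum, so with
`Q = ⊗^k P` the Lyapunov matrix of level `k + 1` splits as
`(P ⊗ Q) 𝒜^{k+1}(A) + 𝒜^{k+1}(A)ᵀ (P ⊗ Q) = P ⊗ (Q 𝒜^k(A) + 𝒜^k(A)ᵀ Q) + (P A + Aᵀ P) ⊗ Q`.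
A Kronecker product of a positive semidefinite and a negative semidefinite matrix is negative
semidefinite (factor the positive one as `Bᵀ B`), so induction on `k` settles every block, and
block-diagonal matrices inherit definiteness blockwise. -/

open scoped Kronecker

section NegSemidef

variable {m p : Type*} [Fintype m] [Fintype p]

theorem NegSemidef.add {M N : Matrix m m ℝ} (hM : NegSemidef M) (hN : NegSemidef N) :
    NegSemidef (M + N) := fun x => by
  rw [add_mulVec, dotProduct_add]
  exact add_nonpos (hM x) (hN x)

theorem NegSemidef.transpose_mul_mul {N : Matrix m m ℝ} (hN : NegSemidef N) (B : Matrix m p ℝ) :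
    NegSemidef (Bᵀ * N * B) := fun x => by
  rw [← mulVec_mulVec, ← mulVec_mulVec, dotProduct_mulVec, vecMul_transpose]
  exact hN (B *ᵥ x)

theorem NegSemidef.one_kronecker [DecidableEq p] {S : Matrix m m ℝ} (hS : NegSemidef S) :
    NegSemidef ((1 : Matrix p p ℝ) ⊗ₖ S) := fun x => by
  have hsplit : x ⬝ᵥ ((1 : Matrix p p ℝ) ⊗ₖ S) *ᵥ x
      = ∑ a : p, (fun c => x (a, c)) ⬝ᵥ S *ᵥ (fun c => x (a, c)) := by
    simp [dotProduct, mulVec, Fintype.sum_prod_type, one_apply, ite_mul, Finset.mul_sum]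
  rw [hsplit]
  exact Finset.sum_nonpos fun a _ => hS _

theorem NegSemidef.kronecker_one [DecidableEq p] {S : Matrix m m ℝ} (hS : NegSemidef S) :
    NegSemidef (S ⊗ₖ (1 : Matrix p p ℝ)) := fun x => by
  have hsplit : x ⬝ᵥ (S ⊗ₖ (1 : Matrix p p ℝ)) *ᵥ x
      = ∑ c : p, (fun a => x (a, c)) ⬝ᵥ S *ᵥ (fun a => x (a, c)) := by
    simp only [dotProduct, mulVec, kroneckerMap_apply, one_apply, mul_ite, mul_one, mul_zero,
      ite_mul, zero_mul, Fintype.sum_prod_type, Finset.sum_ite_eq, Finset.mem_univ, ↓reduceIte,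
      Finset.mul_sum]
    rw [Finset.sum_comm]
  rw [hsplit]
  exact Finset.sum_nonpos fun c _ => hS _

theorem Matrix.PosSemidef.exists_eq_transpose_mul_self {P : Matrix m m ℝ} (hP : P.PosSemidef) :
    ∃ B : Matrix m m ℝ, P = Bᵀ * B := by
  classical
  open scoped MatrixOrder in
  obtain ⟨B, hB⟩ := CStarAlgebra.nonneg_iff_eq_star_mul_self.mp hP.nonneg
  exact ⟨B, by rw [hB, star_eq_conjTranspose, conjTranspose_eq_transpose_of_trivial]⟩

theorem Matrix.PosSemidef.kronecker_negSemidef [DecidableEq m] [DecidableEq p]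
    {P : Matrix p p ℝ} {S : Matrix m m ℝ} (hP : P.PosSemidef) (hS : NegSemidef S) :
    NegSemidef (P ⊗ₖ S) := by
  obtain ⟨B, rfl⟩ := hP.exists_eq_transpose_mul_self
  have hfactor : (Bᵀ * B) ⊗ₖ S = (B ⊗ₖ (1 : Matrix m m ℝ))ᵀ * ((1 : Matrix p p ℝ) ⊗ₖ S)
      * (B ⊗ₖ (1 : Matrix m m ℝ)) := by
    rw [← kroneckerMap_transpose, transpose_one, ← mul_kronecker_mul, ← mul_kronecker_mul]
    simp only [Matrix.mul_one, Matrix.one_mul]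
  rw [hfactor]
  exact hS.one_kronecker.transpose_mul_mul _

theorem NegSemidef.kronecker_posSemidef [DecidableEq m] [DecidableEq p]
    {S : Matrix m m ℝ} {Q : Matrix p p ℝ} (hS : NegSemidef S) (hQ : Q.PosSemidef) :
    NegSemidef (S ⊗ₖ Q) := by
  obtain ⟨B, rfl⟩ := hQ.exists_eq_transpose_mul_self
  have hfactor : S ⊗ₖ (Bᵀ * B) = ((1 : Matrix m m ℝ) ⊗ₖ B)ᵀ * (S ⊗ₖ (1 : Matrix p p ℝ))
      * ((1 : Matrix m m ℝ) ⊗ₖ B) := by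
    rw [← kroneckerMap_transpose, transpose_one, ← mul_kronecker_mul, ← mul_kronecker_mul]
    simp only [Matrix.mul_one, Matrix.one_mul]
  rw [hfactor]
  exact hS.kronecker_one.transpose_mul_mul _

end NegSemidef

section BlockDiagonal

variable {ι : Type*} [Fintype ι] [DecidableEq ι] {m : ι → Type*} [∀ k, Fintype (m k)]

theorem dotProduct_blockDiagonal'_mulVec (M : ∀ k, Matrix (m k) (m k) ℝ) (x : (Σ k, m k) → ℝ) :
    x ⬝ᵥ blockDiagonal' M *ᵥ x = ∑ k, (fun i => x ⟨k, i⟩) ⬝ᵥ M k *ᵥ (fun i => x ⟨k, i⟩) := by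
  rw [dotProduct, ← Finset.univ_sigma_univ, Finset.sum_sigma]
  refine Finset.sum_congr rfl fun k _ => Finset.sum_congr rfl fun i _ => congrArg (x ⟨k, i⟩ * ·) ?_
  simp only [mulVec, dotProduct, ← Finset.univ_sigma_univ, Finset.sum_sigma]
  rw [Finset.sum_eq_single k (fun l _ hl => Finset.sum_eq_zero fun j _ => by
    rw [blockDiagonal'_apply_ne _ _ _ (Ne.symm hl), zero_mul]) (by simp)]
  simp only [blockDiagonal'_apply_eq]

theorem NegSemidef.blockDiagonal' {M : ∀ k, Matrix (m k) (m k) ℝ} (h : ∀ k, NegSemidef (M k)) :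
    NegSemidef (blockDiagonal' M) := fun x => by
  rw [dotProduct_blockDiagonal'_mulVec]
  exact Finset.sum_nonpos fun k _ => h k _

theorem Matrix.PosDef.blockDiagonal' [∀ k, DecidableEq (m k)] {M : ∀ k, Matrix (m k) (m k) ℝ}
    (h : ∀ k, (M k).PosDef) : (blockDiagonal' M).PosDef := by
  refine posDef_iff_dotProduct_mulVec.mpr
    ⟨isHermitian_blockDiagonal'_iff.mpr fun k => (h k).isHermitian, fun x hx => ?_⟩
  obtain ⟨⟨k₀, i₀⟩, hx₀⟩ := Function.ne_iff.mp hx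
  rw [star_trivial, dotProduct_blockDiagonal'_mulVec]
  refine Finset.sum_pos' (fun k _ => ?_) ⟨k₀, Finset.mem_univ _, ?_⟩
  · simpa only [star_trivial] using (h k).posSemidef.dotProduct_mulVec_nonneg (fun i => x ⟨k, i⟩)
  · simpa only [star_trivial] using
      (h k₀).dotProduct_mulVec_pos (x := fun i => x ⟨k₀, i⟩) (Function.ne_iff.mpr ⟨i₀, hx₀⟩)

end BlockDiagonal

theorem kronecker_mul_kroneckerSum_add_transpose_mul {R m p : Type*} [CommRing R]
    [Fintype m] [DecidableEq m] [Fintype p] [DecidableEq p]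
    (P A : Matrix m m R) (Q L : Matrix p p R) :
    (P ⊗ₖ Q) * ((1 : Matrix m m R) ⊗ₖ L + A ⊗ₖ (1 : Matrix p p R))
        + ((1 : Matrix m m R) ⊗ₖ L + A ⊗ₖ (1 : Matrix p p R))ᵀ * (P ⊗ₖ Q)
      = P ⊗ₖ (Q * L + Lᵀ * Q) + (P * A + Aᵀ * P) ⊗ₖ Q := by
  simp only [Matrix.mul_add, Matrix.add_mul, transpose_add, ← kroneckerMap_transpose,
    transpose_one, ← mul_kronecker_mul, kronecker_add, add_kronecker, one_mul, mul_one]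
  abel

section LiftedSystem

variable {n : ℕ} {P A : Matrix (Fin n) (Fin n) ℝ}

theorem posDef_matKronPow (hP : P.PosDef) : ∀ k, (matKronPow P k).PosDef
  | 0 => hP
  | k + 1 => hP.kronecker (posDef_matKronPow hP k)

theorem negSemidef_matKronPow_mul_liftA_add (hP : P.PosDef)
    (hA : NegSemidef (P * A + Aᵀ * P)) :
    ∀ k, NegSemidef (matKronPow P k * liftA A k + (liftA A k)ᵀ * matKronPow P k)
  | 0 => hA
  | k + 1 => by
    have hsplit := (hP.posSemidef.kronecker_negSemidef
      (negSemidef_matKronPow_mul_liftA_add hP hA k)).add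
        (hA.kronecker_posSemidef (posDef_matKronPow hP k).posSemidef)
    rw [← kronecker_mul_kroneckerSum_add_transpose_mul] at hsplit
    exact hsplit

theorem tildeKronPow_mul_tildeA_add (P A : Matrix (Fin n) (Fin n) ℝ) (i : ℕ) :
    tildeKronPow P i * tildeA A i + (tildeA A i)ᵀ * tildeKronPow P i
      = blockDiagonal' fun k : Fin i =>
          matKronPow P k * liftA A k + (liftA A k)ᵀ * matKronPow P k := by
  rw [tildeKronPow, tildeA, blockDiagonal'_transpose, ← blockDiagonal'_mul, ← blockDiagonal'_mul,
    ← blockDiagonal'_add]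
  rfl

end LiftedSystem

/-- if `P₁` is symmetric positive definite and `P₁ Aⱼ + Aⱼᵀ P₁ ≼ 0` for all `j`,
then for every `i ≥ 1` the block-diagonal matrix `𝒫_i = diag(P₁, ⊗²P₁, …, ⊗ⁱP₁)` is symmetric
positive definite and `𝒫_i Ãⁱ(Aⱼ) + Ãⁱ(Aⱼ)ᵀ 𝒫_i ≼ 0` for all `j`. -/
theorem stmt0 {n N : ℕ} (A : Fin N → Matrix (Fin n) (Fin n) ℝ)
    (P₁ : Matrix (Fin n) (Fin n) ℝ) (hP : P₁.PosDef)
    (hLyap : ∀ j, NegSemidef (P₁ * A j + (A j)ᵀ * P₁)) :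
    ∀ i : ℕ, 1 ≤ i →
      (tildeKronPow P₁ i).PosDef ∧
      ∀ j, NegSemidef
        (tildeKronPow P₁ i * tildeA (A j) i + (tildeA (A j) i)ᵀ * tildeKronPow P₁ i) := by
  intro i _
  refine ⟨PosDef.blockDiagonal' fun k => posDef_matKronPow hP k, fun j => ?_⟩
  rw [tildeKronPow_mul_tildeA_add]
  exact NegSemidef.blockDiagonal' fun k => negSemidef_matKronPow_mul_liftA_add hP (hLyap j) k
end
end

section
/- Let P ∈ ℝ^{n×n} and Q ∈ ℝ^{m×m} be symmetric positive semidefinite, and let A ∈ ℝ^{n×n}, B ∈ ℝ^{m×m} satisfy P A + Aᵀ P ≼ 0 and Q B + Bᵀ Q ≼ 0. Then, setting C = I_n ⊗ B + A ⊗ I_m, one has (P ⊗ Q) C + Cᵀ (P ⊗ Q) ≼ 0. -/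
open Matrix

noncomputable section

/-
The Lyapunov form of the Kronecker sum splits as
`(P ⊗ Q)C + Cᵀ(P ⊗ Q) = P ⊗ (QB + BᵀQ) + (PA + AᵀP) ⊗ Q`,
and the negative of each summand is a Kronecker product of two positive semidefinite matrices,
hence positive semidefinite.
-/

open scoped Kronecker

theorem Matrix.kronecker_neg {l m n p R : Type*} [Mul R] [HasDistribNeg R] (X : Matrix l m R)
    (Y : Matrix n p R) : X ⊗ₖ (-Y) = -(X ⊗ₖ Y) := by
  ext
  simp

theorem Matrix.neg_kronecker {l m n p R : Type*} [Mul R] [HasDistribNeg R] (X : Matrix l m R)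
    (Y : Matrix n p R) : (-X) ⊗ₖ Y = -(X ⊗ₖ Y) := by
  ext
  simp

section Lyapunov

variable {ι κ R : Type*} [Fintype ι] [Fintype κ] [CommRing R]

def lyapunov (P A : Matrix ι ι R) : Matrix ι ι R := P * A + Aᵀ * P

theorem Matrix.IsSymm.lyapunov_isSymm {P : Matrix ι ι R} (hP : P.IsSymm) (A : Matrix ι ι R) :
    (lyapunov P A).IsSymm := by
  simpa [lyapunov, transpose_mul, hP.eq] using isSymm_add_transpose_self (P * A)

theorem lyapunov_kroneckerSum [DecidableEq ι] [DecidableEq κ] {P A : Matrix ι ι R}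
    {Q B : Matrix κ κ R} :
    lyapunov (P ⊗ₖ Q) (1 ⊗ₖ B + A ⊗ₖ 1) = P ⊗ₖ lyapunov Q B + lyapunov P A ⊗ₖ Q := by
  simp only [lyapunov, transpose_add, ← kroneckerMap_transpose, transpose_one, kronecker_add,
    add_kronecker, Matrix.mul_add, Matrix.add_mul, ← mul_kronecker_mul, Matrix.mul_one,
    Matrix.one_mul]
  abel

end Lyapunov

theorem negSemidef_of_posSemidef_neg {ι : Type*} [Fintype ι] {M : Matrix ι ι ℝ}
    (h : (-M).PosSemidef) : NegSemidef M := fun x => by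
  simpa [neg_mulVec] using h.dotProduct_mulVec_nonneg x

theorem NegSemidef.posSemidef_neg {ι : Type*} [Fintype ι] {M : Matrix ι ι ℝ}
    (h : NegSemidef M) (hM : M.IsSymm) : (-M).PosSemidef :=
  posSemidef_iff_dotProduct_mulVec.2
    ⟨by simpa using hM.neg, fun x => by simpa [neg_mulVec] using h x⟩

/-- if `P, Q` are symmetric positive semidefinite with `PA + AᵀP ≼ 0` and
`QB + BᵀQ ≼ 0`, then for `C = Iₙ ⊗ B + A ⊗ Iₘ` one has `(P⊗Q)C + Cᵀ(P⊗Q) ≼ 0`. -/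
theorem stmt1 {n m : ℕ} (P : Matrix (Fin n) (Fin n) ℝ) (Q : Matrix (Fin m) (Fin m) ℝ)
    (hP : P.PosSemidef) (hQ : Q.PosSemidef)
    (A : Matrix (Fin n) (Fin n) ℝ) (B : Matrix (Fin m) (Fin m) ℝ)
    (hPA : NegSemidef (P * A + Aᵀ * P)) (hQB : NegSemidef (Q * B + Bᵀ * Q))
    (C : Matrix (Fin n × Fin m) (Fin n × Fin m) ℝ)
    (hC : C = Matrix.kroneckerMap (· * ·) (1 : Matrix (Fin n) (Fin n) ℝ) B
        + Matrix.kroneckerMap (· * ·) A (1 : Matrix (Fin m) (Fin m) ℝ)) :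
    NegSemidef (Matrix.kroneckerMap (· * ·) P Q * C + Cᵀ * Matrix.kroneckerMap (· * ·) P Q) := by
  have hPs : P.IsSymm := isHermitian_iff_isSymm.1 hP.isHermitian
  have hQs : Q.IsSymm := isHermitian_iff_isSymm.1 hQ.isHermitian
  change NegSemidef (lyapunov (P ⊗ₖ Q) C)
  rw [hC, lyapunov_kroneckerSum]
  apply negSemidef_of_posSemidef_neg
  rw [neg_add, ← kronecker_neg, ← neg_kronecker]
  exact (hP.kronecker (hQB.posSemidef_neg (hQs.lyapunov_isSymm B))).add
    ((hPA.posSemidef_neg (hPs.lyapunov_isSymm A)).kronecker hQ)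
end
end

section
/- Let A_1, ..., A_N ∈ ℝ^{n×n} and let P ∈ ℝ^{n×n} be symmetric positive definite with P A_j + A_jᵀ P ≼ 0 for all j = 1, ..., N. Let A : [0,∞) → ℝ^{n×n} take values in the convex hull of {A_1, ..., A_N}, and let z : [0,∞) → ℝⁿ be differentiable with z'(t) = A(t) z(t) and z(0) = b. Then for every c ∈ ℝⁿ and every t ≥ 0, |cᵀ z(t)| ≤ √(cᵀ P⁻¹ c) · √(bᵀ P b). -/
open Matrix

noncomputable section

/-!
`V(t) = zᵀ P z` is a common quadratic Lyapunov function: the condition `P M + Mᵀ P ≼ 0` is convex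
in `M`, so it holds along `A(t)`, whence `V' = zᵀ (P A + Aᵀ P) z ≤ 0` and `V(t) ≤ V(0) = bᵀ P b`.
Writing `cᵀ z = (P⁻¹ c)ᵀ P z`, Cauchy–Schwarz for the inner product defined by `P` gives
`|cᵀ z| ≤ √(cᵀ P⁻¹ c) · √(zᵀ P z)`.
-/

section

variable {ι : Type*} [Fintype ι]

theorem Matrix.PosSemidef.abs_dotProduct_mulVec_le {M : Matrix ι ι ℝ} (hM : M.PosSemidef)
    (x y : ι → ℝ) :
    |x ⬝ᵥ M *ᵥ y| ≤ √(x ⬝ᵥ M *ᵥ x) * √(y ⬝ᵥ M *ᵥ y) := by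
  classical
  have hsymm : y ⬝ᵥ M *ᵥ x = x ⬝ᵥ M *ᵥ y := by
    rw [dotProduct_mulVec, ← mulVec_transpose, ← conjTranspose_eq_transpose_of_trivial,
      hM.isHermitian.eq, dotProduct_comm]
  have hcs := LinearMap.BilinForm.apply_mul_apply_le_of_forall_zero_le (toLinearMap₂' ℝ M)
    (fun v => by simpa [toLinearMap₂'_apply'] using hM.dotProduct_mulVec_nonneg v) x y
  simp only [toLinearMap₂'_apply', hsymm, ← sq] at hcs
  rw [← Real.sqrt_mul (by simpa using hM.dotProduct_mulVec_nonneg x)]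
  exact Real.abs_le_sqrt hcs

theorem Matrix.PosDef.abs_dotProduct_le [DecidableEq ι] {P : Matrix ι ι ℝ} (hP : P.PosDef)
    (c z : ι → ℝ) :
    |c ⬝ᵥ z| ≤ √(c ⬝ᵥ P⁻¹ *ᵥ c) * √(z ⬝ᵥ P *ᵥ z) := by
  have hPinv : P * P⁻¹ = 1 := mul_nonsing_inv _ (isUnit_iff_ne_zero.mpr hP.det_pos.ne')
  have hcs := hP.posSemidef.abs_dotProduct_mulVec_le z (P⁻¹ *ᵥ c)
  rwa [mulVec_mulVec, hPinv, one_mulVec, dotProduct_comm z, dotProduct_comm (P⁻¹ *ᵥ c),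
    mul_comm] at hcs

theorem convex_setOf_negSemidef : Convex ℝ {M : Matrix ι ι ℝ | NegSemidef M} := by
  intro M hM N hN a b ha hb _ x
  simp only [add_mulVec, smul_mulVec, dotProduct_add, dotProduct_smul, smul_eq_mul]
  nlinarith [hM x, hN x]

theorem convex_setOf_negSemidef_lyapunov (P : Matrix ι ι ℝ) :
    Convex ℝ {M : Matrix ι ι ℝ | NegSemidef (P * M + Mᵀ * P)} :=
  convex_setOf_negSemidef.is_linear_preimage (f := fun M => P * M + Mᵀ * P)
    ⟨fun M N => by simp only [Matrix.mul_add, Matrix.add_mul, transpose_add]; abel,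
     fun a M => by simp only [Matrix.mul_smul, Matrix.smul_mul, transpose_smul, smul_add]⟩

theorem HasDerivAt.dotProduct {u v : ℝ → ι → ℝ} {u' v' : ι → ℝ} {t : ℝ}
    (hu : HasDerivAt u u' t) (hv : HasDerivAt v v' t) :
    HasDerivAt (fun s => u s ⬝ᵥ v s) (u' ⬝ᵥ v t + u t ⬝ᵥ v') t := by
  show HasDerivAt (fun s => ∑ i, u s i * v s i) (∑ i, u' i * v t i + ∑ i, u t i * v' i) t
  rw [← Finset.sum_add_distrib]
  exact HasDerivAt.fun_sum fun i _ => (hasDerivAt_pi.mp hu i).mul (hasDerivAt_pi.mp hv i)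

theorem HasDerivAt.mulVec (M : Matrix ι ι ℝ) {u : ℝ → ι → ℝ} {u' : ι → ℝ} {t : ℝ}
    (hu : HasDerivAt u u' t) : HasDerivAt (fun s => M *ᵥ u s) (M *ᵥ u') t :=
  (LinearMap.toContinuousLinearMap (mulVecLin M)).hasFDerivAt.comp_hasDerivAt t hu

theorem dotProduct_lyapunov_mulVec (P A : Matrix ι ι ℝ) (x : ι → ℝ) :
    x ⬝ᵥ (P * A + Aᵀ * P) *ᵥ x = (A *ᵥ x) ⬝ᵥ P *ᵥ x + x ⬝ᵥ P *ᵥ (A *ᵥ x) := by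
  rw [add_mulVec, dotProduct_add, ← mulVec_mulVec, ← mulVec_mulVec, dotProduct_mulVec x Aᵀ,
    vecMul_transpose, add_comm]

theorem antitoneOn_dotProduct_mulVec_of_lyapunov {P : Matrix ι ι ℝ} {A : ℝ → Matrix ι ι ℝ}
    {z : ℝ → ι → ℝ} (hLyap : ∀ t, 0 ≤ t → NegSemidef (P * A t + (A t)ᵀ * P))
    (hz : ∀ t, 0 ≤ t → HasDerivAt z (A t *ᵥ z t) t) :
    AntitoneOn (fun t => z t ⬝ᵥ P *ᵥ z t) (Set.Ici 0) := by
  have hV : ∀ t, 0 ≤ t → HasDerivAt (fun s => z s ⬝ᵥ P *ᵥ z s)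
      (z t ⬝ᵥ (P * A t + (A t)ᵀ * P) *ᵥ z t) t := fun t ht => by
    rw [dotProduct_lyapunov_mulVec]
    exact (hz t ht).dotProduct ((hz t ht).mulVec P)
  refine antitoneOn_of_deriv_nonpos (convex_Ici 0)
    (fun t ht => (hV t ht).continuousAt.continuousWithinAt) (fun t ht => ?_) (fun t ht => ?_)
  all_goals rw [interior_Ici] at ht
  · exact (hV t ht.le).differentiableAt.differentiableWithinAt
  · exact (hV t ht.le).deriv ▸ hLyap t ht.le (z t)

end

/-- impulse-response bound. If `P` is symmetric positive definite with
`P Aⱼ + Aⱼᵀ P ≼ 0`, `A(t)` evolves in the convex hull of `{A₁, …, A_N}` on `[0,∞)`, and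
`z' = A(t)z`, `z(0) = b`, then `|cᵀz(t)| ≤ √(cᵀP⁻¹c)·√(bᵀPb)` for all `t ≥ 0`. -/
theorem stmt9 {n N : ℕ} (As : Fin N → Matrix (Fin n) (Fin n) ℝ)
    (P : Matrix (Fin n) (Fin n) ℝ) (hP : P.PosDef)
    (hLyap : ∀ j, NegSemidef (P * As j + (As j)ᵀ * P))
    (A : ℝ → Matrix (Fin n) (Fin n) ℝ)
    (hA : ∀ t : ℝ, 0 ≤ t → A t ∈ convexHull ℝ (Set.range As))
    (z : ℝ → Fin n → ℝ) (b : Fin n → ℝ)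
    (hz : ∀ t : ℝ, 0 ≤ t → HasDerivAt z (A t *ᵥ z t) t) (hz0 : z 0 = b) :
    ∀ (c : Fin n → ℝ) (t : ℝ), 0 ≤ t →
      |c ⬝ᵥ z t| ≤ Real.sqrt (c ⬝ᵥ P⁻¹ *ᵥ c) * Real.sqrt (b ⬝ᵥ P *ᵥ b) := by
  intro c t ht
  have hLyapA : ∀ s, 0 ≤ s → NegSemidef (P * A s + (A s)ᵀ * P) := fun s hs =>
    convexHull_min (Set.range_subset_iff.mpr hLyap) (convex_setOf_negSemidef_lyapunov P)
      (hA s hs)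
  have hdecay : z t ⬝ᵥ P *ᵥ z t ≤ b ⬝ᵥ P *ᵥ b :=
    hz0 ▸ antitoneOn_dotProduct_mulVec_of_lyapunov hLyapA hz Set.self_mem_Ici ht ht
  calc |c ⬝ᵥ z t| ≤ √(c ⬝ᵥ P⁻¹ *ᵥ c) * √(z t ⬝ᵥ P *ᵥ z t) := hP.abs_dotProduct_le c (z t)
    _ ≤ √(c ⬝ᵥ P⁻¹ *ᵥ c) * √(b ⬝ᵥ P *ᵥ b) := by gcongr
end
end

section
/- Let x_0 = (1,1) ∈ ℝ². For every a ∈ ℝ² with ‖a − x_0‖² ≤ 3 and every t ≥ 0, one has ‖e^{−t} a − x_0‖² ≤ 3. That is, the set S = {x ∈ ℝ² : (x − x_0)ᵀ(x − x_0) ≤ 3} is invariant under the flow of the linear system ẋ = −x, whose solution with initial condition a is x(t) = e^{−t} a. -/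
open Matrix

/-- with `x₀ = (1,1)`, the set `S = {x ∈ ℝ² : (x−x₀)ᵀ(x−x₀) ≤ 3}` is invariant
under the flow `x(t) = e^{−t}a` of `ẋ = −x`: if `‖a − x₀‖² = (a−x₀)ᵀ(a−x₀) ≤ 3` then
`(e^{−t}a − x₀)ᵀ(e^{−t}a − x₀) ≤ 3` for all `t ≥ 0`. -/
theorem stmt17 :
    ∀ a : Fin 2 → ℝ, (a - ![1, 1]) ⬝ᵥ (a - ![1, 1]) ≤ 3 →
      ∀ t : ℝ, 0 ≤ t →
        (Real.exp (-t) • a - ![1, 1]) ⬝ᵥ (Real.exp (-t) • a - ![1, 1]) ≤ 3 := by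
  intro a h t ht
  set s := Real.exp (-t) with hs
  have hs0 : 0 < s := Real.exp_pos _
  have hs1 : s ≤ 1 := Real.exp_le_one_iff.mpr (by linarith)
  simp only [dotProduct, Fin.sum_univ_two, Pi.sub_apply, Pi.smul_apply,
    Matrix.cons_val_zero, Matrix.cons_val_one, Matrix.head_cons, smul_eq_mul] at h ⊢
  nlinarith [sq_nonneg (a 0 - a 1), sq_nonneg (a 0 + a 1), sq_nonneg (a 0), sq_nonneg (a 1),
    mul_nonneg (mul_nonneg hs0.le (sub_nonneg.mpr hs1)) (sq_nonneg (a 0)),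
    mul_nonneg (mul_nonneg hs0.le (sub_nonneg.mpr hs1)) (sq_nonneg (a 1)),
    mul_le_one₀ hs1 hs0.le hs1]
end
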